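/- Let ε′ > 0, θ ∈ [0, π], and let k be a positive integer. Define the perturbed collision probability P̃ = (1 − θ/π)·(e^{ε′} − 1)²/(e^{ε′} + 1)² + 2e^{ε′}/(e^{ε′} + 1)², and let I₁, …, I_k be i.i.d. Bernoulli(P̃) random variables. Define the estimator θ̂ = π·( 1 − [ ((e^{ε′}+1)²/(e^{ε′}−1)²) · (1/k)·Σ_{j=1}^k I_j − 2e^{ε′}/(e^{ε′}−1)² ] ). Then E[θ̂] = θ and Var(θ̂) = V/k, where V = θ(π − θ) + 2π²·e^{ε′}/(e^{ε′} − 1)² + 4π²·e^{2ε′}/(e^{ε′} − 1)⁴. -/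

import Mathlib

/-!
Write `A = (e^{ε'}+1)²/(e^{ε'}-1)²` and `B = 2e^{ε'}/(e^{ε'}-1)²`. The estimator is the affine
function `θ̂ = π(1 + B) - (πA/k)·S` of the count `S = Σⱼ Iⱼ`, which has mean `kP̃` and variance
`kP̃(1 - P̃)`. Randomized response is inverted exactly: `A·P̃ = 1 - θ/π + B`, and since
`A = 1 + 2B` also `A·(1 - P̃) = θ/π + B`. Hence `E θ̂ = π(1 + B) - πA·P̃ = θ` and
`Var θ̂ = π²(A·P̃)(A·(1 - P̃))/k = π²(1 - θ/π + B)(θ/π + B)/k`, which expands to `V/k`.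
-/

open MeasureTheory ProbabilityTheory Real

/-- The uniform distribution on `[0,1]`, used to drive the Bernoulli samples. -/
noncomputable def uniform01 : Measure ℝ := volume.restrict (Set.Icc (0 : ℝ) 1)

instance : IsProbabilityMeasure uniform01 :=
  ⟨by rw [uniform01, Measure.restrict_apply_univ, Real.volume_Icc]; norm_num⟩

/-- The perturbed collision probability
`P̃ = (1 − θ/π)·(e^{ε'}−1)²/(e^{ε'}+1)² + 2e^{ε'}/(e^{ε'}+1)²`. -/
noncomputable def Ptilde (ε' θ : ℝ) : ℝ :=
  (1 - θ / π) * (Real.exp ε' - 1) ^ 2 / (Real.exp ε' + 1) ^ 2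
    + 2 * Real.exp ε' / (Real.exp ε' + 1) ^ 2

/-- The DP-SignRP-RR angle estimator
`θ̂ = π(1 − ((e^{ε'}+1)²/(e^{ε'}−1)²·(1/k)·Σⱼ Iⱼ − 2e^{ε'}/(e^{ε'}−1)²))`, where
`Iⱼ = 1{rⱼ ≤ P̃}` are i.i.d. `Bernoulli(P̃)` indicators driven by uniform variables. -/
noncomputable def thetaHat (k : ℕ) (ε' θ : ℝ) (r : Fin k → ℝ) : ℝ :=
  π * (1 - ((Real.exp ε' + 1) ^ 2 / (Real.exp ε' - 1) ^ 2
        * ((1 : ℝ) / k) * (∑ j : Fin k, if r j ≤ Ptilde ε' θ then (1 : ℝ) else 0)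
      - 2 * Real.exp ε' / (Real.exp ε' - 1) ^ 2))

lemma variance_indicator_one {Ω : Type*} {mΩ : MeasurableSpace Ω} {μ : Measure Ω}
    [IsProbabilityMeasure μ] {s : Set Ω} (hs : MeasurableSet s) :
    Var[s.indicator 1; μ] = μ.real s * (1 - μ.real s) := by
  have hsq : s.indicator (1 : Ω → ℝ) ^ 2 = s.indicator 1 := by
    ext ω; by_cases h : ω ∈ s <;> simp [h]
  have hmem : MemLp (s.indicator (1 : Ω → ℝ)) 2 μ :=
    (memLp_const 1).indicator hs
  rw [variance_eq_sub hmem, hsq, integral_indicator_one hs]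
  ring

lemma uniform01_real_Iic {p : ℝ} (hp : p ∈ Set.Icc 0 1) : uniform01.real (Set.Iic p) = p := by
  have : Set.Iic p ∩ Set.Icc 0 1 = Set.Icc 0 p := by
    rw [Set.inter_comm, ← Set.Ici_inter_Iic, Set.inter_assoc, Set.Iic_inter_Iic,
      min_eq_right hp.2, Set.Ici_inter_Iic]
  rw [uniform01, measureReal_restrict_apply measurableSet_Iic, this,
    Real.volume_real_Icc_of_le hp.1, sub_zero]

section IID

variable {ι α : Type*} [Fintype ι] {mα : MeasurableSpace α} {μ : Measure α}
  [IsProbabilityMeasure μ] {g : α → ℝ}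

lemma integral_sum_comp_eval_pi (hg : Integrable g μ) :
    ∫ ω, ∑ i, g (ω i) ∂Measure.pi (fun _ : ι => μ) = Fintype.card ι * ∫ x, g x ∂μ := by
  rw [integral_finsetSum _ fun i _ => integrable_comp_eval (i := i) hg]
  simp [integral_comp_eval (μ := fun _ : ι => μ) hg.aestronglyMeasurable]

lemma variance_sum_comp_eval_pi (hg : MemLp g 2 μ) :
    Var[fun ω => ∑ i, g (ω i); Measure.pi (fun _ : ι => μ)] = Fintype.card ι * Var[g; μ] := by
  have := variance_sum_pi (μ := fun _ : ι => μ) (X := fun _ => g) fun _ => hg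
  simp only [Finset.sum_fn] at this
  simp [this]

end IID

lemma Ptilde_mem_Icc (ε' : ℝ) {θ : ℝ} (hθ : θ ∈ Set.Icc 0 π) : Ptilde ε' θ ∈ Set.Icc 0 1 := by
  have hu : θ / π ∈ Set.Icc 0 1 := ⟨div_nonneg hθ.1 pi_pos.le, div_le_one_of_le₀ hθ.2 pi_pos.le⟩
  have hE := exp_pos ε'
  have hweight := mul_nonneg (sub_nonneg.2 hu.2) (sq_nonneg (exp ε' - 1))
  rw [Ptilde, ← add_div]
  constructor
  · positivity
  · rw [div_le_one (by positivity)]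
    nlinarith [hu.1]

lemma thetaHat_eq_const_sub_mul_sum (k : ℕ) (ε' θ : ℝ) :
    thetaHat k ε' θ = fun r => π * (1 + 2 * exp ε' / (exp ε' - 1) ^ 2)
      - π * ((exp ε' + 1) ^ 2 / (exp ε' - 1) ^ 2) / k
        * ∑ j, (Set.Iic (Ptilde ε' θ)).indicator 1 (r j) := by
  ext r
  simp only [thetaHat, Set.indicator_apply, Set.mem_Iic, Pi.one_apply]
  ring

lemma exp_sub_one_ne_zero {x : ℝ} (hx : x ≠ 0) : exp x - 1 ≠ 0 :=
  sub_ne_zero.2 fun h => hx ((exp_eq_one_iff x).1 h)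

section Algebra

variable {ε' : ℝ} (hε' : ε' ≠ 0) (θ : ℝ)
include hε'

lemma mul_Ptilde :
    (exp ε' + 1) ^ 2 / (exp ε' - 1) ^ 2 * Ptilde ε' θ
      = 1 - θ / π + 2 * exp ε' / (exp ε' - 1) ^ 2 := by
  have : exp ε' - 1 ≠ 0 := exp_sub_one_ne_zero hε'
  have : exp ε' + 1 ≠ 0 := (add_pos (exp_pos ε') one_pos).ne'
  rw [Ptilde]
  field_simp

lemma mul_one_sub_Ptilde :
    (exp ε' + 1) ^ 2 / (exp ε' - 1) ^ 2 * (1 - Ptilde ε' θ)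
      = θ / π + 2 * exp ε' / (exp ε' - 1) ^ 2 := by
  have : exp ε' - 1 ≠ 0 := exp_sub_one_ne_zero hε'
  rw [mul_one_sub, mul_Ptilde hε']
  field_simp
  ring

end Algebra

/-- **Utility of DP-SignRP-RR angle estimation.** For `ε' > 0`, `θ ∈ [0, π]` and i.i.d.
`Bernoulli(P̃)` indicators `I₁, …, I_k`, the estimator `θ̂` satisfies `E[θ̂] = θ` and
`Var(θ̂) = V/k` with `V = θ(π−θ) + 2π²e^{ε'}/(e^{ε'}−1)² + 4π²e^{2ε'}/(e^{ε'}−1)⁴`. -/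
theorem dp_signrp_rr_estimator_mean_variance (k : ℕ) (hk : 0 < k)
    (ε' θ : ℝ) (hε' : 0 < ε') (hθ : θ ∈ Set.Icc (0 : ℝ) π) :
    (∫ r : Fin k → ℝ, thetaHat k ε' θ r
        ∂(Measure.pi (fun _ : Fin k => uniform01))) = θ
    ∧ variance (thetaHat k ε' θ) (Measure.pi (fun _ : Fin k => uniform01))
      = (θ * (π - θ) + 2 * π ^ 2 * Real.exp ε' / (Real.exp ε' - 1) ^ 2
          + 4 * π ^ 2 * Real.exp (2 * ε') / (Real.exp ε' - 1) ^ 4) / k := by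
  have hp := Ptilde_mem_Icc ε' hθ
  have hI : MemLp ((Set.Iic (Ptilde ε' θ)).indicator (1 : ℝ → ℝ)) 2 uniform01 :=
    (memLp_const 1).indicator measurableSet_Iic
  have hS : Integrable (fun r : Fin k → ℝ => ∑ j, (Set.Iic (Ptilde ε' θ)).indicator 1 (r j))
      (Measure.pi fun _ => uniform01) :=
    integrable_finsetSum _ fun j _ =>
      integrable_comp_eval (μ := fun _ => uniform01) (hI.integrable one_le_two)
  have hk' : (k : ℝ) ≠ 0 := by positivity
  rw [thetaHat_eq_const_sub_mul_sum]
  constructor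
  · rw [integral_sub (integrable_const _) (hS.const_mul _), integral_const, integral_const_mul,
      integral_sum_comp_eval_pi (hI.integrable one_le_two), integral_indicator_one measurableSet_Iic,
      uniform01_real_Iic hp, Fintype.card_fin, probReal_univ, one_smul]
    calc _ = π * (1 + 2 * exp ε' / (exp ε' - 1) ^ 2)
          - π * ((exp ε' + 1) ^ 2 / (exp ε' - 1) ^ 2 * Ptilde ε' θ) := by
          field_simp
      _ = θ := by
        rw [mul_Ptilde hε'.ne']
        field_simp
        ring
  · rw [variance_const_sub (hS.const_mul _).aestronglyMeasurable, variance_const_mul,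
      variance_sum_comp_eval_pi hI,
      variance_indicator_one measurableSet_Iic, uniform01_real_Iic hp, Fintype.card_fin]
    calc _ = π ^ 2 * ((exp ε' + 1) ^ 2 / (exp ε' - 1) ^ 2 * Ptilde ε' θ)
          * ((exp ε' + 1) ^ 2 / (exp ε' - 1) ^ 2 * (1 - Ptilde ε' θ)) / k := by
          field_simp
      _ = _ := by
        have := exp_sub_one_ne_zero hε'.ne'
        rw [mul_Ptilde hε'.ne', mul_one_sub_Ptilde hε'.ne', two_mul ε', exp_add]
        field_simp
        ring
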